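/- For every word β in the generators σ_1^{±1}, …, σ_{n−1}^{±1} of B_n and all 1 ≤ i, j ≤ n, writing i₀ = perm(β)(i), the entry (Φ^L_β)_{ij} lies in the ℤ-submodule of 𝒜_n spanned by monomials of the form a_{i₀ i₁} a_{i₁ i₂} ⋯ a_{i_{l−1} j} with l ≥ 0 and i₁, …, i_{l−1} ∈ {1, …, n} (the empty product, l = 0, being 1); moreover the constant (l = 0) monomial occurs only if i₀ = j, i.e. if i₀ ≠ j then (Φ^L_β)_{ij} lies in the span of such monomials with l ≥ 1. -/

import Mathlib

open scoped TensorProduct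

/-- Generator index set for the algebra `𝒜ₙ`: pairs `(i,j)` with `1 ≤ i,j ≤ n`, `i ≠ j`. -/
abbrev Idx (n : ℕ) : Type := {q : ℕ × ℕ // q.1 ≠ q.2 ∧ 1 ≤ q.1 ∧ q.1 ≤ n ∧ 1 ≤ q.2 ∧ q.2 ≤ n}

/-- `𝒜ₙ`, the free noncommutative unital `ℤ`-algebra on the generators `a_{ij}`. -/
abbrev FA (n : ℕ) : Type := FreeAlgebra ℤ (Idx n)

/-- The generator `a_{ij}` when the indices are in range (`1 ≤ i,j ≤ n`, `i ≠ j`); `0` otherwise. -/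
noncomputable def gen (n i j : ℕ) : FA n :=
  if h : i ≠ j ∧ 1 ≤ i ∧ i ≤ n ∧ 1 ≤ j ∧ j ≤ n then FreeAlgebra.ι ℤ (⟨(i, j), h⟩ : Idx n) else 0

/-- Image of the generator `a_{ij}` under `φ_{σ_k}`. -/
noncomputable def phiGenImg (n k i j : ℕ) : FA n :=
  if i = k then
    (if j = k + 1 then -gen n (k+1) k
     else gen n (k+1) j - gen n (k+1) k * gen n k j)
  else if i = k + 1 then
    (if j = k then -gen n k (k+1) else gen n k j)
  else
    if j = k then gen n i (k+1) - gen n i k * gen n k (k+1)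
    else if j = k + 1 then gen n i k
    else gen n i j

/-- Image of the generator `a_{ij}` under `φ_{σ_k}⁻¹ = φ_{σ_k⁻¹}`. -/
noncomputable def phiInvGenImg (n k i j : ℕ) : FA n :=
  if i = k + 1 then
    (if j = k then -gen n k (k+1)
     else gen n k j - gen n k (k+1) * gen n (k+1) j)
  else if i = k then
    (if j = k + 1 then -gen n (k+1) k else gen n (k+1) j)
  else
    if j = k + 1 then gen n i k - gen n i (k+1) * gen n (k+1) k
    else if j = k then gen n i (k+1)
    else gen n i j

/-- `φ_{σ_k}` for the letter `(k, true)` and `φ_{σ_k⁻¹}` for the letter `(k, false)`. -/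
noncomputable def phiLetter (n : ℕ) (l : ℕ × Bool) : FA n →ₐ[ℤ] FA n :=
  FreeAlgebra.lift ℤ fun g : Idx n =>
    if l.2 then phiGenImg n l.1 g.val.1 g.val.2 else phiInvGenImg n l.1 g.val.1 g.val.2

/-- `φ_β` for a word `β` in the letters `σ_k^{±1}`, with `φ_{β₁β₂} = φ_{β₁} ∘ φ_{β₂}`. -/
noncomputable def phiWord (n : ℕ) (w : List (ℕ × Bool)) : FA n →ₐ[ℤ] FA n :=
  w.foldr (fun l f => (phiLetter n l).comp f) (AlgHom.id ℤ (FA n))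

/-- `β` is a word in the generators `σ_1^{±1}, …, σ_{n−1}^{±1}` of the braid group `B_n`. -/
def WordIn (n : ℕ) (w : List (ℕ × Bool)) : Prop := ∀ l ∈ w, 1 ≤ l.1 ∧ l.1 + 1 ≤ n

/-- The natural inclusion `𝒜ₙ → 𝒜ₙ₊₁`. -/
noncomputable def incl (n : ℕ) : FA n →ₐ[ℤ] FA (n+1) :=
  FreeAlgebra.lift ℤ fun g : Idx n => gen (n+1) g.val.1 g.val.2

/-- `M` (a matrix recorded as a function `ℕ → ℕ → 𝒜ₙ`, supported on `[1,n] × [1,n]`)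
is the matrix `Φ^L_β`:  `φ*_β(a_{i,n+1}) = ∑_j M_{ij} a_{j,n+1}`. -/
def IsPhiL (n : ℕ) (w : List (ℕ × Bool)) (M : ℕ → ℕ → FA n) : Prop :=
  (∀ i j, i ∉ Finset.Icc 1 n ∨ j ∉ Finset.Icc 1 n → M i j = 0) ∧
  ∀ i ∈ Finset.Icc 1 n,
    phiWord (n+1) w (gen (n+1) i (n+1)) =
      ∑ j ∈ Finset.Icc 1 n, incl n (M i j) * gen (n+1) j (n+1)

/-- `M` is the matrix `Φ^R_β`:  `φ*_β(a_{n+1,i}) = ∑_j a_{n+1,j} M_{ji}`. -/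
def IsPhiR (n : ℕ) (w : List (ℕ × Bool)) (M : ℕ → ℕ → FA n) : Prop :=
  (∀ i j, i ∉ Finset.Icc 1 n ∨ j ∉ Finset.Icc 1 n → M i j = 0) ∧
  ∀ i ∈ Finset.Icc 1 n,
    phiWord (n+1) w (gen (n+1) (n+1) i) =
      ∑ j ∈ Finset.Icc 1 n, gen (n+1) (n+1) j * incl n (M j i)

/-- The permutation (of `ℕ`, via 1-based strand labels) determined by a braid word,
with `perm (w₁ ++ w₂) = perm w₁ * perm w₂`. -/
def permWord (w : List (ℕ × Bool)) : Equiv.Perm ℕ :=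
  w.foldr (fun l f => Equiv.swap l.1 (l.1 + 1) * f) 1

/-- The writhe (exponent sum) of a braid word. -/
def writhe (w : List (ℕ × Bool)) : ℤ :=
  (w.map fun l => if l.2 then (1 : ℤ) else -1).sum

/-- Conjugation, as an algebra map to the opposite algebra. -/
noncomputable def conjHom (n : ℕ) : FA n →ₐ[ℤ] (FA n)ᵐᵒᵖ :=
  FreeAlgebra.lift ℤ fun g : Idx n => MulOpposite.op (gen n g.val.2 g.val.1)

/-- Conjugation `x ↦ x̄`: the `ℤ`-linear anti-automorphism with `a_{ij} ↦ a_{ji}`. -/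
noncomputable def conj (n : ℕ) (x : FA n) : FA n := (conjHom n x).unop

/-- Conjugation as a `ℤ`-linear map. -/
noncomputable def conjLin (n : ℕ) : FA n →ₗ[ℤ] FA n :=
  (MulOpposite.opLinearEquiv ℤ).symm.toLinearMap ∘ₗ (conjHom n).toLinearMap

/-- The word `τ_{a,p} = σ_a σ_{a+1} ⋯ σ_{a+p−1}`. -/
def tauWord (a p : ℕ) : List (ℕ × Bool) := (List.range p).map fun t => (a + t, true)

/-- The word `κ_{a,l} = τ_{a+l−1,p} τ_{a+l−2,p} ⋯ τ_{a,p}`. -/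
def kappaWord (a l p : ℕ) : List (ℕ × Bool) :=
  (((List.range l).reverse).map fun t => tauWord (a + t) p).flatten

/-- The inverse of a braid word. -/
def invWord (w : List (ℕ × Bool)) : List (ℕ × Bool) := w.reverse.map fun l => (l.1, !l.2)

/-- The `p`-cable `α^{(p)}` of a braid word `α` (each strand replaced by `p` parallel strands):
substitute `σ_m ↦ κ_{(m−1)p+1,p}` and `σ_m⁻¹ ↦ κ_{(m−1)p+1,p}⁻¹`. -/
def cable (p : ℕ) (w : List (ℕ × Bool)) : List (ℕ × Bool) :=
  (w.map fun l =>
    if l.2 then kappaWord ((l.1 - 1) * p + 1) p p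
    else invWord (kappaWord ((l.1 - 1) * p + 1) p p)).flatten

/-- The product `a_{x₁x₂} a_{x₂x₃} ⋯ a_{x_{m-1}x_m}` along a list `[x₁, …, x_m]`
(`1` for lists of length `≤ 1`). -/
noncomputable def pathFactors (n : ℕ) : List ℕ → FA n
  | x :: y :: rest => gen n x y * pathFactors n (y :: rest)
  | _ => 1

/-- `A(i,j,X) = Σ_{Y ⊆ X} (−1)^{|Y|} a_{i y₁} a_{y₁ y₂} ⋯ a_{y_k j}` (ascending order on `Y`). -/
noncomputable def Aexp (n i j : ℕ) (X : Finset ℕ) : FA n :=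
  ∑ Y ∈ X.powerset, ((-1 : ℤ) ^ Y.card) • pathFactors n (i :: (Y.sort (· ≤ ·) ++ [j]))

/-- `A'(i,j,X) = Σ_{Y ⊆ X} (−1)^{|Y|} a_{i y_k} a_{y_k y_{k−1}} ⋯ a_{y₁ j}` (descending order). -/
noncomputable def A'exp (n i j : ℕ) (X : Finset ℕ) : FA n :=
  ∑ Y ∈ X.powerset, ((-1 : ℤ) ^ Y.card) • pathFactors n (i :: ((Y.sort (· ≤ ·)).reverse ++ [j]))

/-- `B'(i,j,X) = Σ_{Y ⊆ X, min Y ≠ j} c_Y a_{i y_k} ⋯ a_{y₁ j}`, where `c_Y = (−1)^{|Y|+1}` if all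
elements of `Y` exceed `j` (including `Y = ∅`), and `c_Y = (−1)^{|Y|}` otherwise. -/
noncomputable def B'exp (n i j : ℕ) (X : Finset ℕ) : FA n :=
  ∑ Y ∈ X.powerset.filter (fun Y => Y.min ≠ (j : WithTop ℕ)),
    (if ∀ y ∈ Y, j < y then ((-1 : ℤ) ^ (Y.card + 1)) else ((-1 : ℤ) ^ Y.card)) •
      pathFactors n (i :: ((Y.sort (· ≤ ·)).reverse ++ [j]))

/-- For `i = (q_i − 1)p + r_i` with `1 ≤ r_i ≤ p`: the quotient `q_i`. -/
def qIdx (p i : ℕ) : ℕ := (i - 1) / p + 1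

/-- For `i = (q_i − 1)p + r_i` with `1 ≤ r_i ≤ p`: the remainder `r_i`. -/
def rIdx (p i : ℕ) : ℕ := (i - 1) % p + 1

/-- The homomorphism `ψ : 𝒜_{kp} → 𝒜_k ⊗ 𝒜_p`. -/
noncomputable def psi (k p : ℕ) : FA (k * p) →ₐ[ℤ]
    @TensorProduct ℤ _ (FA k) (FA p) _ _ Algebra.toModule Algebra.toModule :=
  FreeAlgebra.lift ℤ fun g : Idx (k * p) =>
    if qIdx p g.val.1 = qIdx p g.val.2 then
      (1 : FA k) ⊗ₜ[ℤ] gen p (rIdx p g.val.1) (rIdx p g.val.2)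
    else if rIdx p g.val.1 = rIdx p g.val.2 then
      gen k (qIdx p g.val.1) (qIdx p g.val.2) ⊗ₜ[ℤ] (1 : FA p)
    else if (qIdx p g.val.1 < qIdx p g.val.2 ∧ rIdx p g.val.2 < rIdx p g.val.1) ∨
            (qIdx p g.val.2 < qIdx p g.val.1 ∧ rIdx p g.val.1 < rIdx p g.val.2) then 0
    else gen k (qIdx p g.val.1) (qIdx p g.val.2) ⊗ₜ[ℤ] gen p (rIdx p g.val.1) (rIdx p g.val.2)

/-- `ψ*(x · a_{i,*}) = ψ(x) · (a_{q_i,*} ⊗ a_{r_i,*})`, the image of the element `x · a_{i,*}`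
of `𝒜_{kp}^L` under `ψ* : 𝒜_{kp}^L → 𝒜_k^L ⊗ 𝒜_p^L`, the target realized inside
`𝒜_{k+1} ⊗ 𝒜_{p+1}`. -/
noncomputable def psiStarElt (k p : ℕ) (x : FA (k * p)) (i : ℕ) :
    @TensorProduct ℤ _ (FA (k+1)) (FA (p+1)) _ _ Algebra.toModule Algebra.toModule :=
  (Algebra.TensorProduct.map (incl k) (incl p)) (psi k p x) *
    ((gen (k+1) (qIdx p i) (k+1) ⊗ₜ[ℤ] gen (p+1) (rIdx p i) (p+1) :
      @TensorProduct ℤ _ (FA (k+1)) (FA (p+1)) _ _ Algebra.toModule Algebra.toModule))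

/-- The `(i,j)` entry of `Δ(β) = diag[(−1)^{w(β)}, 1, …, 1]` (1-based indices). -/
noncomputable def deltaEnt (w : List (ℕ × Bool)) (i j : ℕ) : ℂ :=
  if i = j then (if i = 1 then (-1 : ℂ) ^ writhe w else 1) else 0

/-!
Call a `ℤ`-combination of monomials `a_{a i₁} a_{i₁ i₂} ⋯ a_{i_{l-1} b}` (the empty monomial `1`
allowed only when `a = b`) a walk from `a` to `b`. Walks compose, and `φ_{σ_k^{±1}}` sends every
generator `a_{xy}` to a walk from `s x` to `s y`, where `s = (k k+1)`; hence it sends walks from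
`a` to `b` to walks from `s a` to `s b`. Since `φ_σ` commutes with `𝒜_n ⊂ 𝒜_{n+1}`,
`Φ^L_{σβ} = φ_σ(Φ^L_β) · Φ^L_σ`, and `Φ^L_σ` is the permutation matrix of `s` up to one entry
`-a_{s(c) c}`. By induction on `β`, `(Φ^L_β)_{ij}` is a walk from `perm(β)(i)` to `j`. Finally
`Φ^L_β` is unique: the substitution `a_{t,n+1} ↦ δ_{tj}` recovers its `j`-th column.
-/

open Finset

lemma gen_self (n a : ℕ) : gen n a a = 0 := dif_neg fun h => h.1 rfl

lemma gen_val {n : ℕ} (g : Idx n) : gen n g.val.1 g.val.2 = FreeAlgebra.ι ℤ g := dif_pos g.2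

lemma incl_gen {n a b : ℕ} (ha : a ≤ n) (hb : b ≤ n) : incl n (gen n a b) = gen (n+1) a b := by
  by_cases h : a ≠ b ∧ 1 ≤ a ∧ a ≤ n ∧ 1 ≤ b ∧ b ≤ n
  · rw [gen, dif_pos h, incl, FreeAlgebra.lift_ι_apply, gen, dif_pos]
    dsimp only
    omega
  · rw [gen, dif_neg h, map_zero, gen, dif_neg (by omega)]

noncomputable def substLast (n j : ℕ) : FA (n+1) →ₐ[ℤ] FA n :=
  FreeAlgebra.lift ℤ fun g => if g.val.2 = n+1 then (if g.val.1 = j then 1 else 0)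
    else gen n g.val.1 g.val.2

lemma substLast_comp_incl (n j : ℕ) : (substLast n j).comp (incl n) = AlgHom.id ℤ (FA n) := by
  ext g
  have hg := g.2
  change substLast n j (incl n (FreeAlgebra.ι ℤ g)) = FreeAlgebra.ι ℤ g
  rw [← gen_val, incl_gen (by omega) (by omega), gen, dif_pos (by omega), substLast,
    FreeAlgebra.lift_ι_apply, if_neg (by dsimp only; omega), gen_val]

lemma substLast_gen_last {n j t : ℕ} (ht : t ∈ Icc 1 n) :
    substLast n j (gen (n+1) t (n+1)) = if t = j then 1 else 0 := by
  have ht := mem_Icc.mp ht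
  rw [gen, dif_pos (by omega), substLast, FreeAlgebra.lift_ι_apply, if_pos rfl]

lemma IsPhiL.unique {n : ℕ} {w : List (ℕ × Bool)} {M N : ℕ → ℕ → FA n}
    (hM : IsPhiL n w M) (hN : IsPhiL n w N) {i j : ℕ} (hi : i ∈ Icc 1 n) (hj : j ∈ Icc 1 n) :
    M i j = N i j := by
  have hread : ∀ P : ℕ → FA n, substLast n j (∑ t ∈ Icc 1 n, incl n (P t) * gen (n+1) t (n+1))
      = P j := fun P => by
    simp only [map_sum, map_mul, ← AlgHom.comp_apply, substLast_comp_incl, AlgHom.id_apply]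
    rw [sum_congr rfl fun t ht => by rw [substLast_gen_last ht, mul_ite, mul_one, mul_zero],
      sum_ite_eq' _ _ _, if_pos hj]
  rw [← hread (M i), ← hread (N i), ← hM.2 i hi, ← hN.2 i hi]

def pathMonomials (n a b : ℕ) : Set (FA n) :=
  {x | ∃ l : List ℕ, (∀ m ∈ l, m ∈ Icc 1 n) ∧ x = pathFactors n (a :: (l ++ [b]))}

def walkMonomials (n a b : ℕ) : Set (FA n) := {x | a = b ∧ x = 1 ∨ x ∈ pathMonomials n a b}

def walkSpan (n a b : ℕ) : Submodule ℤ (FA n) := Submodule.span ℤ (walkMonomials n a b)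

lemma pathFactors_append (n : ℕ) (xs : List ℕ) (b : ℕ) (ys : List ℕ) :
    pathFactors n (xs ++ b :: ys) = pathFactors n (xs ++ [b]) * pathFactors n (b :: ys) := by
  induction xs with
  | nil => exact (one_mul _).symm
  | cons x xs ih =>
    cases xs with
    | nil => simp [pathFactors]
    | cons y t =>
      simp only [List.cons_append, pathFactors] at ih ⊢
      rw [ih, mul_assoc]

lemma pathMonomials_mul {n a b c : ℕ} (hb : b ∈ Icc 1 n) {u v : FA n}
    (hu : u ∈ pathMonomials n a b) (hv : v ∈ pathMonomials n b c) :
    u * v ∈ pathMonomials n a c := by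
  obtain ⟨l₁, h₁, rfl⟩ := hu
  obtain ⟨l₂, h₂, rfl⟩ := hv
  refine ⟨l₁ ++ b :: l₂, ?_, ?_⟩
  · simp only [List.mem_append, List.mem_cons]
    rintro m (hm | rfl | hm)
    exacts [h₁ m hm, hb, h₂ m hm]
  · have e : a :: (l₁ ++ b :: l₂ ++ [c]) = a :: l₁ ++ b :: (l₂ ++ [c]) := by simp
    rw [e, pathFactors_append]
    rfl

lemma walkMonomials_mul {n a b c : ℕ} (hb : b ∈ Icc 1 n) {u v : FA n}
    (hu : u ∈ walkMonomials n a b) (hv : v ∈ walkMonomials n b c) :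
    u * v ∈ walkMonomials n a c := by
  rcases hu with ⟨rfl, rfl⟩ | hu
  · rwa [one_mul]
  rcases hv with ⟨rfl, rfl⟩ | hv
  · rw [mul_one]
    exact Or.inr hu
  exact Or.inr (pathMonomials_mul hb hu hv)

lemma walkSpan_mul {n a b c : ℕ} (hb : b ∈ Icc 1 n) {x y : FA n}
    (hx : x ∈ walkSpan n a b) (hy : y ∈ walkSpan n b c) : x * y ∈ walkSpan n a c := by
  have hxy := (Submodule.span_mul_span ℤ (walkMonomials n a b) (walkMonomials n b c)).le
    (Submodule.mul_mem_mul hx hy)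
  refine Submodule.span_mono ?_ hxy
  rintro _ ⟨u, hu, v, hv, rfl⟩
  exact walkMonomials_mul hb hu hv

lemma one_mem_walkSpan (n a : ℕ) : 1 ∈ walkSpan n a a :=
  Submodule.subset_span (Or.inl ⟨rfl, rfl⟩)

lemma gen_mem_walkSpan (n a b : ℕ) : gen n a b ∈ walkSpan n a b :=
  Submodule.subset_span (Or.inr ⟨[], by simp, by simp [pathFactors]⟩)

lemma gen_mul_gen_mem_walkSpan {n c : ℕ} (a b : ℕ) (hc : c ∈ Icc 1 n) :
    gen n a c * gen n c b ∈ walkSpan n a b :=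
  walkSpan_mul hc (gen_mem_walkSpan n a c) (gen_mem_walkSpan n c b)

section Letters

variable {n : ℕ} {l : ℕ × Bool}

lemma phiLetter_gen {x y : ℕ} (h : x ≠ y ∧ 1 ≤ x ∧ x ≤ n ∧ 1 ≤ y ∧ y ≤ n) :
    phiLetter n l (gen n x y) =
      if l.2 then phiGenImg n l.1 x y else phiInvGenImg n l.1 x y := by
  rw [gen, dif_pos h, phiLetter, FreeAlgebra.lift_ι_apply]

lemma swap_mem_Icc (hl1 : 1 ≤ l.1) (hl : l.1 + 1 ≤ n) {x : ℕ} (hx : x ∈ Icc 1 n) :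
    Equiv.swap l.1 (l.1 + 1) x ∈ Icc 1 n := by
  rw [Equiv.swap_apply_def, mem_Icc] at *
  split_ifs <;> omega

lemma phiLetter_gen_mem_walkSpan (hl1 : 1 ≤ l.1) (hl : l.1 + 1 ≤ n) {x y : ℕ}
    (hx : x ∈ Icc 1 n) (hy : y ∈ Icc 1 n) :
    phiLetter n l (gen n x y) ∈
      walkSpan n (Equiv.swap l.1 (l.1 + 1) x) (Equiv.swap l.1 (l.1 + 1) y) := by
  obtain ⟨k, b⟩ := l
  rcases eq_or_ne x y with rfl | hxy
  · rw [gen_self, map_zero]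
    exact zero_mem _
  have hk : k ∈ Icc 1 n := mem_Icc.mpr ⟨hl1, by omega⟩
  have hk' : k + 1 ∈ Icc 1 n := mem_Icc.mpr ⟨by omega, hl⟩
  rw [mem_Icc] at hx hy
  rw [phiLetter_gen ⟨hxy, hx.1, hx.2, hy.1, hy.2⟩]
  cases b <;>
  · simp only [phiGenImg, phiInvGenImg, Equiv.swap_apply_def, Bool.false_eq_true, if_true,
      if_false]
    split_ifs <;> subst_vars <;>
      first
      | omega
      | exact gen_mem_walkSpan _ _ _
      | exact neg_mem (gen_mem_walkSpan _ _ _)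
      | exact sub_mem (gen_mem_walkSpan _ _ _) (gen_mul_gen_mem_walkSpan _ _ ‹_›)

lemma phiLetter_pathFactors_mem_walkSpan (hl1 : 1 ≤ l.1) (hl : l.1 + 1 ≤ n) {b : ℕ}
    (hb : b ∈ Icc 1 n) (m : List ℕ) (hm : ∀ x ∈ m, x ∈ Icc 1 n) {a : ℕ} (ha : a ∈ Icc 1 n) :
    phiLetter n l (pathFactors n (a :: (m ++ [b]))) ∈
      walkSpan n (Equiv.swap l.1 (l.1 + 1) a) (Equiv.swap l.1 (l.1 + 1) b) := by
  induction m generalizing a with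
  | nil =>
    change phiLetter n l (gen n a b * 1) ∈ _
    rw [mul_one]
    exact phiLetter_gen_mem_walkSpan hl1 hl ha hb
  | cons x m ih =>
    have hx := hm x List.mem_cons_self
    rw [List.cons_append, pathFactors, map_mul]
    exact walkSpan_mul (swap_mem_Icc hl1 hl hx) (phiLetter_gen_mem_walkSpan hl1 hl ha hx)
      (ih (fun y hy => hm y (List.mem_cons_of_mem x hy)) hx)

lemma phiLetter_mem_walkSpan (hl1 : 1 ≤ l.1) (hl : l.1 + 1 ≤ n) {a b : ℕ}
    (ha : a ∈ Icc 1 n) (hb : b ∈ Icc 1 n) {x : FA n} (hx : x ∈ walkSpan n a b) :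
    phiLetter n l x ∈
      walkSpan n (Equiv.swap l.1 (l.1 + 1) a) (Equiv.swap l.1 (l.1 + 1) b) := by
  induction hx using Submodule.span_induction with
  | mem u hu =>
    rcases hu with ⟨rfl, rfl⟩ | ⟨m, hm, rfl⟩
    · rw [map_one]
      exact one_mem_walkSpan n _
    · exact phiLetter_pathFactors_mem_walkSpan hl1 hl hb m hm ha
  | zero => rw [map_zero]; exact zero_mem _
  | add x y _ _ hx hy => rw [map_add]; exact add_mem hx hy
  | smul c x _ hx => rw [map_zsmul]; exact Submodule.smul_mem _ c hx

lemma phiLetter_comp_incl (hl : l.1 + 1 ≤ n) :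
    (phiLetter (n+1) l).comp (incl n) = (incl n).comp (phiLetter n l) := by
  ext g
  have hg := g.2
  change phiLetter (n+1) l (incl n (FreeAlgebra.ι ℤ g)) =
    incl n (phiLetter n l (FreeAlgebra.ι ℤ g))
  rw [← gen_val, incl_gen (by omega) (by omega), phiLetter_gen (by omega), phiLetter_gen hg]
  cases l.2 <;>
  · simp only [phiGenImg, phiInvGenImg, Bool.false_eq_true, if_true, if_false]
    split_ifs <;> simp (disch := omega) only [map_sub, map_mul, map_neg, incl_gen]

/-- `φ_l(a_{j,n+1}) = a_{s j,n+1}`, `s = (l.1 l.1+1)`, for every `j` except `j = pivot l`. -/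
def pivot (l : ℕ × Bool) : ℕ := if l.2 then l.1 else l.1 + 1

lemma phiLetter_gen_last (hl : l.1 + 1 ≤ n) {j : ℕ} (hj : j ∈ Icc 1 n) :
    phiLetter (n+1) l (gen (n+1) j (n+1)) =
      gen (n+1) (Equiv.swap l.1 (l.1 + 1) j) (n+1) -
        if j = pivot l then
          gen (n+1) (Equiv.swap l.1 (l.1 + 1) (pivot l)) (pivot l) * gen (n+1) (pivot l) (n+1)
        else 0 := by
  rw [mem_Icc] at hj
  rw [phiLetter_gen (by omega)]
  obtain ⟨k, b⟩ := l
  cases b <;>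
  · simp only [phiGenImg, phiInvGenImg, pivot, Equiv.swap_apply_def, Bool.false_eq_true,
      if_true, if_false]
    split_ifs <;> first | omega | (subst_vars; simp)

noncomputable def letterMatrix (n : ℕ) (l : ℕ × Bool) (j t : ℕ) : FA n :=
  if j ∈ Icc 1 n ∧ t ∈ Icc 1 n then
    (if t = Equiv.swap l.1 (l.1 + 1) j then 1 else 0) -
      if j = pivot l ∧ t = pivot l then gen n (Equiv.swap l.1 (l.1 + 1) (pivot l)) (pivot l)
      else 0
  else 0

lemma isPhiL_letterMatrix (hl1 : 1 ≤ l.1) (hl : l.1 + 1 ≤ n) :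
    IsPhiL n [l] (letterMatrix n l) := by
  refine ⟨fun j t h => if_neg (by tauto), fun j hj => ?_⟩
  change phiLetter (n+1) l _ = _
  rw [phiLetter_gen_last hl hj]
  have hc : 1 ≤ pivot l ∧ pivot l ≤ n := by unfold pivot; split_ifs <;> omega
  have hsc := mem_Icc.mp (swap_mem_Icc hl1 hl (mem_Icc.mpr hc))
  rw [sum_congr rfl fun t ht => by rw [letterMatrix, if_pos ⟨hj, ht⟩, map_sub, sub_mul]]
  simp [sum_sub_distrib, ite_and, apply_ite (incl n), ite_mul, swap_mem_Icc hl1 hl hj, hc,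
    incl_gen hsc.2 hc.2]

lemma letterMatrix_mem_walkSpan {j t : ℕ} (hj : j ∈ Icc 1 n) (ht : t ∈ Icc 1 n) :
    letterMatrix n l j t ∈ walkSpan n (Equiv.swap l.1 (l.1 + 1) j) t := by
  rw [letterMatrix, if_pos ⟨hj, ht⟩]
  refine sub_mem ?_ ?_
  · split_ifs with h
    · rw [h]
      exact one_mem_walkSpan n _
    · exact zero_mem _
  · split_ifs with h
    · obtain ⟨rfl, rfl⟩ := h
      exact gen_mem_walkSpan n _ _
    · exact zero_mem _

end Letters

section Induction

variable {n : ℕ} {l : ℕ × Bool} {w : List (ℕ × Bool)}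

lemma permWord_mem_Icc (hw : WordIn n w) {i : ℕ} (hi : i ∈ Icc 1 n) :
    permWord w i ∈ Icc 1 n := by
  induction w with
  | nil => exact hi
  | cons l w ih =>
    obtain ⟨hl1, hl⟩ := hw l List.mem_cons_self
    exact swap_mem_Icc hl1 hl (ih fun l' h => hw l' (List.mem_cons_of_mem l h))

def HasWalkEntries (n : ℕ) (w : List (ℕ × Bool)) (M : ℕ → ℕ → FA n) : Prop :=
  ∀ i ∈ Icc 1 n, ∀ j ∈ Icc 1 n, M i j ∈ walkSpan n (permWord w i) j

noncomputable def letterMul (n : ℕ) (l : ℕ × Bool) (M L : ℕ → ℕ → FA n) (i t : ℕ) : FA n :=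
  ∑ j ∈ Icc 1 n, phiLetter n l (M i j) * L j t

lemma IsPhiL.cons {M L : ℕ → ℕ → FA n} (hl : l.1 + 1 ≤ n) (hM : IsPhiL n w M)
    (hL : IsPhiL n [l] L) : IsPhiL n (l :: w) (letterMul n l M L) := by
  refine ⟨fun i t h => sum_eq_zero fun j hj => ?_, fun i hi => ?_⟩
  · rcases h with hi | ht
    · rw [hM.1 i j (Or.inl hi), map_zero, zero_mul]
    · rw [hL.1 j t (Or.inr ht), mul_zero]
  calc phiWord (n+1) (l :: w) (gen (n+1) i (n+1))
      = phiLetter (n+1) l (∑ j ∈ Icc 1 n, incl n (M i j) * gen (n+1) j (n+1)) := by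
        rw [← hM.2 i hi]; rfl
    _ = ∑ j ∈ Icc 1 n, incl n (phiLetter n l (M i j)) *
          ∑ t ∈ Icc 1 n, incl n (L j t) * gen (n+1) t (n+1) := by
        simp only [map_sum, map_mul, ← AlgHom.comp_apply, phiLetter_comp_incl hl]
        exact sum_congr rfl fun j hj => congrArg _ (hL.2 j hj)
    _ = ∑ t ∈ Icc 1 n, incl n (letterMul n l M L i t) * gen (n+1) t (n+1) := by
        simp only [letterMul, map_sum, map_mul, sum_mul, mul_sum, mul_assoc]
        exact sum_comm

lemma HasWalkEntries.cons {M L : ℕ → ℕ → FA n} (hl1 : 1 ≤ l.1) (hl : l.1 + 1 ≤ n)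
    (hw : WordIn n w) (hM : HasWalkEntries n w M) (hL : HasWalkEntries n [l] L) :
    HasWalkEntries n (l :: w) (letterMul n l M L) := fun i hi t ht =>
  sum_mem fun j hj => walkSpan_mul (swap_mem_Icc hl1 hl hj)
    (phiLetter_mem_walkSpan hl1 hl (permWord_mem_Icc hw hi) hj (hM i hi j hj)) (hL j hj t ht)

lemma hasWalkEntries_letterMatrix : HasWalkEntries n [l] (letterMatrix n l) :=
  fun _ hj _ ht => letterMatrix_mem_walkSpan hj ht

lemma exists_isPhiL_hasWalkEntries (hw : WordIn n w) :
    ∃ M, IsPhiL n w M ∧ HasWalkEntries n w M := by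
  induction w with
  | nil =>
    refine ⟨fun i j => if i ∈ Icc 1 n ∧ i = j then 1 else 0,
      ⟨fun i j h => if_neg ?_, fun i hi => ?_⟩, fun i hi j hj => ?_⟩
    · rintro ⟨hi, rfl⟩
      tauto
    · simp [phiWord, hi]
    · dsimp only
      split_ifs with h
      · rw [← h.2]
        exact one_mem_walkSpan n i
      · exact zero_mem _
  | cons l w ih =>
    obtain ⟨hl1, hl⟩ := hw l List.mem_cons_self
    have hw' : WordIn n w := fun l' h => hw l' (List.mem_cons_of_mem l h)
    obtain ⟨M, hM, hMw⟩ := ih hw'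
    exact ⟨letterMul n l M (letterMatrix n l), hM.cons hl (isPhiL_letterMatrix hl1 hl),
      hMw.cons hl1 hl hw' hasWalkEntries_letterMatrix⟩

end Induction

/-- Every entry `(Φ^L_β)_{ij}` is a `ℤ`-linear combination of path monomials
`a_{i₀i₁} a_{i₁i₂} ⋯ a_{i_{l−1}j}` (`l ≥ 0` factors, the empty product being `1`) starting at
`i₀ = perm(β)(i)`; the constant monomial occurs only if `i₀ = j`. -/
theorem PhiL_entry_monomials (n : ℕ) (w : List (ℕ × Bool)) (hw : WordIn n w)
    (M : ℕ → ℕ → FA n) (hM : IsPhiL n w M) (i j : ℕ)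
    (hi : i ∈ Finset.Icc 1 n) (hj : j ∈ Finset.Icc 1 n) :
    M i j ∈ Submodule.span ℤ
      {x : FA n | x = 1 ∨ ∃ l : List ℕ, (∀ m ∈ l, m ∈ Finset.Icc 1 n) ∧
        x = pathFactors n (permWord w i :: (l ++ [j]))} ∧
    (permWord w i ≠ j → M i j ∈ Submodule.span ℤ
      {x : FA n | ∃ l : List ℕ, (∀ m ∈ l, m ∈ Finset.Icc 1 n) ∧
        x = pathFactors n (permWord w i :: (l ++ [j]))}) := by
  obtain ⟨N, hN, hNw⟩ := exists_isPhiL_hasWalkEntries hw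
  have hMij : M i j ∈ walkSpan n (permWord w i) j := hM.unique hN hi hj ▸ hNw i hi j hj
  refine ⟨Submodule.span_mono (fun x hx => hx.imp And.right id) hMij, fun hne => ?_⟩
  have hwalk : walkMonomials n (permWord w i) j = pathMonomials n (permWord w i) j := by
    ext x
    simp [walkMonomials, hne]
  rwa [walkSpan, hwalk] at hMij
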